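/- arXiv:math/0510230 — 3 statements merged into one kernel-verified Lean document; each statement's English description precedes it below -/
import Mathlib

section
/- Let w(x,y) be a word in the free group on {x,y} with w(x,y)⁻¹ = w(y⁻¹, x⁻¹) as elements of the free group. If w(x,y) = x^{i₁} y^{j₁} ⋯ x^{i_k} y^{j_k} in reduced alternating form, then i_m = j_{k+1−m} for all m = 1, …, k. -/
/-!
Both `w⁻¹` and `w(y⁻¹, x⁻¹)` are products `∏ₘ y ^ aₘ * x ^ bₘ` of `k` blocks, with exponent
pairs `(-j_{k+1-m}, -i_{k+1-m})` and `(-i_m, -j_m)` respectively, and both exponent sequences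
vanish at most at their two ends. Spelling out every power of such a product then gives its
reduced word, from which the exponents are read off, block by block, as the signed lengths of
the maximal runs of one letter. Hence the two exponent sequences coincide.
-/

theorem List.reverse_ofFn {α : Type*} {n : ℕ} (f : Fin n → α) :
    (List.ofFn f).reverse = List.ofFn (fun i => f i.rev) := by
  simp [List.ofFn_eq_map, ← List.map_reverse, List.finRange_reverse]

namespace FreeGroup

variable {α : Type*}

theorem zpow_of_injective (a : α) : Function.Injective fun n : ℤ => of a ^ n :=
  injective_zpow_iff_not_isOfFinOrder.mpr (not_isOfFinOrder_of_isMulTorsionFree (of_ne_one a))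

theorem IsReduced.append_of_forall_fst {L₁ L₂ : List (α × Bool)} {c : α}
    (h₁ : IsReduced L₁) (h₂ : IsReduced L₂) (hL₁ : ∀ x ∈ L₁, x.1 = c)
    (hL₂ : ∀ y ∈ L₂.head?, y.1 ≠ c) : IsReduced (L₁ ++ L₂) :=
  List.isChain_append.mpr ⟨h₁, h₂, fun x hx y hy hxy =>
    absurd (hxy ▸ hL₁ x (List.mem_of_mem_getLast? hx)) (hL₂ y hy)⟩

variable [DecidableEq α]

theorem toWord_of_zpow (a : α) (n : ℤ) :
    (of a ^ n).toWord = List.replicate n.natAbs (a, decide (0 ≤ n)) := by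
  obtain ⟨n, rfl | rfl⟩ := n.eq_nat_or_neg
  · simp [toWord_of_pow]
  · rw [zpow_neg, zpow_natCast, toWord_inv, toWord_of_pow]
    cases n <;> simp [invRev]; omega

theorem fst_of_mem_toWord_of_zpow {a : α} {n : ℤ} {x : α × Bool}
    (hx : x ∈ (of a ^ n).toWord) : x.1 = a := by
  rw [toWord_of_zpow] at hx
  rw [List.eq_of_mem_replicate hx]

theorem toWord_of_zpow_ne_nil {a : α} {n : ℤ} (hn : n ≠ 0) : (of a ^ n).toWord ≠ [] := by
  simp [toWord_of_zpow, hn]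

theorem of_zpow_toWord_append_inj {a : α} {m n : ℤ} {L L' : List (α × Bool)}
    (hL : ∀ x ∈ L.head?, x.1 ≠ a) (hL' : ∀ x ∈ L'.head?, x.1 ≠ a)
    (h : (of a ^ m).toWord ++ L = (of a ^ n).toWord ++ L') : m = n ∧ L = L' := by
  have takeWhile_eq : ∀ {n : ℤ} {L : List (α × Bool)}, (∀ x ∈ L.head?, x.1 ≠ a) →
      ((of a ^ n).toWord ++ L).takeWhile (fun x : α × Bool => x.1 = a) = (of a ^ n).toWord := by
    intro n L hL
    rw [List.takeWhile_append_of_pos fun x hx => decide_eq_true (fst_of_mem_toWord_of_zpow hx)]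
    cases L with
    | nil => simp
    | cons y L => simpa using hL y rfl
  have hpow : (of a ^ m).toWord = (of a ^ n).toWord := by
    rw [← takeWhile_eq hL, h, takeWhile_eq hL']
  rw [hpow] at h
  exact ⟨zpow_of_injective a (toWord_injective hpow), List.append_cancel_left h⟩

section Alternating

variable (a b : α)

def altProd (l : List (ℤ × ℤ)) : FreeGroup α :=
  (l.map fun p => of a ^ p.1 * of b ^ p.2).prod

def altWord (l : List (ℤ × ℤ)) : List (α × Bool) :=
  l.flatMap fun p => (of a ^ p.1).toWord ++ (of b ^ p.2).toWord

@[simp]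
theorem altWord_cons (p : ℤ × ℤ) (l : List (ℤ × ℤ)) :
    altWord a b (p :: l) = (of a ^ p.1).toWord ++ ((of b ^ p.2).toWord ++ altWord a b l) := by
  simp [altWord]

theorem mk_altWord (l : List (ℤ × ℤ)) : mk (altWord a b l) = altProd a b l := by
  induction l with
  | nil => rfl
  | cons p l ih =>
    rw [altWord_cons, ← mul_mk, ← mul_mk, mk_toWord, mk_toWord, ih]
    simp [altProd, mul_assoc]

variable {a b}

theorem fst_of_mem_head?_altWord {l : List (ℤ × ℤ)} (hl : ∀ p ∈ l.head?, p.1 ≠ 0) :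
    ∀ x ∈ (altWord a b l).head?, x.1 = a := by
  intro x hx
  cases l with
  | nil => simp [altWord] at hx
  | cons p r =>
    rw [altWord_cons, List.head?_append_of_ne_nil _ (toWord_of_zpow_ne_nil (hl p rfl))] at hx
    exact fst_of_mem_toWord_of_zpow (List.mem_of_mem_head? hx)

theorem fst_of_mem_head?_toWord_append_altWord {p : ℤ × ℤ} {r : List (ℤ × ℤ)}
    (hp : ∀ _ ∈ r.head?, p.2 ≠ 0) :
    ∀ x ∈ ((of b ^ p.2).toWord ++ altWord a b r).head?, x.1 = b := by
  intro x hx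
  by_cases hp0 : p.2 = 0
  · obtain rfl : r = [] := List.head?_eq_none_iff.mp (Option.eq_none_iff_forall_ne_some.mpr
      fun q hq => hp q hq hp0)
    simp [hp0, altWord] at hx
  · rw [List.head?_append_of_ne_nil _ (toWord_of_zpow_ne_nil hp0)] at hx
    exact fst_of_mem_toWord_of_zpow (List.mem_of_mem_head? hx)

theorem isReduced_altWord (hab : a ≠ b) {l : List (ℤ × ℤ)}
    (hl : l.IsChain fun p q => p.2 ≠ 0 ∧ q.1 ≠ 0) : IsReduced (altWord a b l) := by
  induction l with
  | nil => exact IsReduced.nil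
  | cons p r ih =>
    obtain ⟨hpr, hr⟩ := List.isChain_cons.mp hl
    rw [altWord_cons]
    refine isReduced_toWord.append_of_forall_fst
      (isReduced_toWord.append_of_forall_fst (ih hr) (fun x => fst_of_mem_toWord_of_zpow)
        fun x hx => ?_) (fun x => fst_of_mem_toWord_of_zpow) fun x hx => ?_
    · rw [fst_of_mem_head?_altWord (fun q hq => (hpr q hq).2) x hx]
      exact hab
    · rw [fst_of_mem_head?_toWord_append_altWord (fun q hq => (hpr q hq).1) x hx]
      exact hab.symm

theorem altWord_injective (hab : a ≠ b) {l l' : List (ℤ × ℤ)} (hlen : l.length = l'.length)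
    (hl : l.IsChain fun p q => p.2 ≠ 0 ∧ q.1 ≠ 0) (hl' : l'.IsChain fun p q => p.2 ≠ 0 ∧ q.1 ≠ 0)
    (h : altWord a b l = altWord a b l') : l = l' := by
  induction l generalizing l' with
  | nil => exact (List.length_eq_zero_iff.mp hlen.symm).symm
  | cons p r ih =>
    cases l' with
    | nil => simp at hlen
    | cons p' r' =>
      obtain ⟨hpr, hr⟩ := List.isChain_cons.mp hl
      obtain ⟨hpr', hr'⟩ := List.isChain_cons.mp hl'
      rw [altWord_cons, altWord_cons] at h
      have head_ne {c : α} {d : α} (hcd : c ≠ d) {L : List (α × Bool)}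
          (hL : ∀ x ∈ L.head?, x.1 = c) : ∀ x ∈ L.head?, x.1 ≠ d :=
        fun x hx => hL x hx ▸ hcd
      obtain ⟨h1, h⟩ := of_zpow_toWord_append_inj
        (head_ne hab.symm (fst_of_mem_head?_toWord_append_altWord fun q hq => (hpr q hq).1))
        (head_ne hab.symm (fst_of_mem_head?_toWord_append_altWord fun q hq => (hpr' q hq).1)) h
      obtain ⟨h2, h⟩ := of_zpow_toWord_append_inj
        (head_ne hab (fst_of_mem_head?_altWord fun q hq => (hpr q hq).2))
        (head_ne hab (fst_of_mem_head?_altWord fun q hq => (hpr' q hq).2)) h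
      rw [Prod.ext h1 h2, ih (by simpa using hlen) hr hr' h]

theorem toWord_altProd (hab : a ≠ b) {l : List (ℤ × ℤ)}
    (hl : l.IsChain fun p q => p.2 ≠ 0 ∧ q.1 ≠ 0) : (altProd a b l).toWord = altWord a b l := by
  rw [← mk_altWord, toWord_mk, (isReduced_altWord hab hl).reduce_eq]

theorem altProd_injective (hab : a ≠ b) {l l' : List (ℤ × ℤ)} (hlen : l.length = l'.length)
    (hl : l.IsChain fun p q => p.2 ≠ 0 ∧ q.1 ≠ 0) (hl' : l'.IsChain fun p q => p.2 ≠ 0 ∧ q.1 ≠ 0)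
    (h : altProd a b l = altProd a b l') : l = l' :=
  altWord_injective hab hlen hl hl' <| by rw [← toWord_altProd hab hl, h, toWord_altProd hab hl']

end Alternating

end FreeGroup

theorem isChain_ofFn_of_ne_zero {k : ℕ} {f g : Fin k → ℤ}
    (hf : ∀ m : Fin k, (m : ℕ) ≠ 0 → f m ≠ 0) (hg : ∀ m : Fin k, (m : ℕ) ≠ k - 1 → g m ≠ 0) :
    (List.ofFn fun m => (f m, g m)).IsChain fun p q => p.2 ≠ 0 ∧ q.1 ≠ 0 :=
  List.isChain_ofFn.mpr fun m hm => ⟨hg _ (by simp; omega), hf _ (by simp)⟩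

open FreeGroup in
/-- Let `w = x^{i₁} y^{j₁} ⋯ x^{i_k} y^{j_k}` be a word in reduced alternating form
in the free group on two generators `x = of false`, `y = of true` (all interior
exponents nonzero; only `i₁` and `j_k` may vanish).  If `w(x,y)⁻¹ = w(y⁻¹, x⁻¹)`,
then `i_m = j_{k+1-m}` for all `m`. -/
theorem exponents_palindromic_of_inv_symmetry
    (w : FreeGroup Bool) (k : ℕ) (i j : Fin k → ℤ)
    (hw : w = (List.ofFn fun m : Fin k =>
      (FreeGroup.of false) ^ (i m) * (FreeGroup.of true) ^ (j m)).prod)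
    (hred : ∀ m : Fin k, ((m : ℕ) ≠ 0 → i m ≠ 0) ∧ ((m : ℕ) ≠ k - 1 → j m ≠ 0))
    (hsym : w⁻¹ = FreeGroup.lift (fun t : Bool =>
      bif t then (FreeGroup.of false)⁻¹ else (FreeGroup.of true)⁻¹) w) :
    ∀ m : Fin k, i m = j m.rev := by
  have hinv : w⁻¹ = altProd true false (List.ofFn fun m => (-j m.rev, -i m.rev)) := by
    rw [hw, List.prod_inv_reverse, altProd, List.map_ofFn, List.map_ofFn, List.reverse_ofFn]
    simp [Function.comp_def, zpow_neg]
  have hsub : FreeGroup.lift (fun t : Bool =>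
      bif t then (FreeGroup.of false)⁻¹ else (FreeGroup.of true)⁻¹) w
      = altProd true false (List.ofFn fun m => (-i m, -j m)) := by
    rw [hw, map_list_prod, altProd, List.map_ofFn, List.map_ofFn]
    simp [Function.comp_def, zpow_neg]
  have hrev := List.ofFn_injective <| altProd_injective (by decide) (by simp)
    (isChain_ofFn_of_ne_zero (fun m hm => by simpa using (hred m).1 hm)
      (fun m hm => by simpa using (hred m).2 hm))
    (isChain_ofFn_of_ne_zero (fun m hm => by simpa using (hred m.rev).2 (by simp; omega))
      (fun m hm => by simpa using (hred m.rev).1 (by simp; omega)))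
    (hsub.symm.trans (hsym.symm.trans hinv))
  intro m
  simpa using congrArg Prod.fst (congrFun hrev m)
end

section
/- In a free group F on a single generator x (infinite cyclic group), every monoid automorphism Φ of End(F) has the form Φ(μ) = s ∘ μ ∘ s⁻¹ where s(xⁿ) = x^{φ(n)} for some automorphism φ of the multiplicative monoid of integers ℤ. -/
open FreeGroup

private abbrev X : FreeGroup Unit := FreeGroup.of ()
private noncomputable abbrev E : FreeGroup Unit ≃ ℤ := FreeGroup.freeGroupUnitEquivInt

private lemma E_symm (n : ℤ) : E.symm n = X ^ n := rfl

private lemma E_pow (n : ℤ) : E (X ^ n) = n := E.apply_symm_apply n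

private lemma E_mul (g h : FreeGroup Unit) : E (g * h) = E g + E h := by
  simp [FreeGroup.freeGroupUnitEquivInt, map_mul, FreeGroup.sum.map_mul]

private lemma end_apply (μ : Monoid.End (FreeGroup Unit)) (g : FreeGroup Unit) :
    μ g = X ^ (E (μ X) * E g) := by
  conv_lhs => rw [← E.symm_apply_apply g, E_symm]
  rw [map_zpow, ← E.symm_apply_apply (μ X), E_symm, ← zpow_mul, E_pow]

private noncomputable def d : Monoid.End (FreeGroup Unit) ≃* ℤ where
  toFun μ := E (μ X)
  invFun n := FreeGroup.lift (fun _ => X ^ n)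
  left_inv μ := by
    apply FreeGroup.ext_hom
    rintro ⟨⟩
    show FreeGroup.lift (fun _ => X ^ (E (μ X))) X = μ X
    rw [FreeGroup.lift_apply_of, ← E_symm, E.symm_apply_apply]
  right_inv n := by
    show E (FreeGroup.lift (fun _ => X ^ n) X) = n
    rw [FreeGroup.lift_apply_of, E_pow]
  map_mul' μ ν := by
    show E ((μ * ν) X) = E (μ X) * E (ν X)
    have : (μ * ν) X = X ^ (E (μ X) * E (ν X)) := by
      show μ (ν X) = _
      rw [end_apply μ (ν X), end_apply ν X, E_pow]
    rw [this, E_pow]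

/-- For the infinite cyclic (free) group `F` on one generator `x`, every monoid
automorphism `Φ` of `End(F)` is conjugation by a bijection `s` of `F` of the form
`s (xⁿ) = x^{φ n}` for some automorphism `φ` of the multiplicative monoid `ℤ`. -/
theorem infCyclic_endAut_from_int_mul_aut
    (Φ : Monoid.End (FreeGroup Unit) ≃* Monoid.End (FreeGroup Unit)) :
    ∃ (φ : ℤ ≃* ℤ) (s : FreeGroup Unit ≃ FreeGroup Unit),
      (∀ n : ℤ, s ((FreeGroup.of ()) ^ n) = (FreeGroup.of ()) ^ (φ n)) ∧
      ∀ μ : Monoid.End (FreeGroup Unit),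
        ((Φ μ : Monoid.End (FreeGroup Unit)) : FreeGroup Unit → FreeGroup Unit) =
          (s : FreeGroup Unit → FreeGroup Unit) ∘ μ ∘
            (s.symm : FreeGroup Unit → FreeGroup Unit) := by
  set φ : ℤ ≃* ℤ := (d.symm.trans Φ).trans d with hφ
  set s : FreeGroup Unit ≃ FreeGroup Unit := (E.trans φ.toEquiv).trans E.symm with hs
  have hsx : ∀ n : ℤ, s (X ^ n) = X ^ (φ n) := by
    intro n
    simp [hs, E_pow, E_symm]
  refine ⟨φ, s, hsx, ?_⟩
  intro μ
  funext g
  have hdΦ : d (Φ μ) = φ (d μ) := by simp [hφ]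
  have hss : s.symm g = X ^ (φ.symm (E g)) := by
    simp [hs, E_symm]
  show (Φ μ) g = s (μ (s.symm g))
  rw [end_apply (Φ μ) g, hss, end_apply μ, E_pow, hsx]
  show X ^ (d (Φ μ) * E g) = X ^ φ (d μ * φ.symm (E g))
  rw [hdΦ, _root_.map_mul φ, φ.apply_symm_apply]
end

section
/- In the free monoid on a finite set X with |X| ≥ 2, the word-reversal map υ is not a monoid homomorphism, but ν ↦ υ ∘ ν ∘ υ sends monoid endomorphisms to monoid endomorphisms; moreover this map is not inner: there is no monoid automorphism σ of the free monoid with υ ∘ ν ∘ υ = σ ∘ ν ∘ σ⁻¹ for all endomorphisms ν. -/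
/-!
Reversal fixes the endomorphism `constEnd a` sending every letter to `a`, so an automorphism `σ`
inducing the mirror conjugation commutes with every `constEnd a`. Then `σ` and `σ⁻¹` send each
letter `a` to a power of `a`, which forces `σ = id`; but the mirror conjugation does move the
endomorphism sending every letter to `x * y`.
-/

/-- Word reversal on a free monoid. -/
def mirror {X : Type*} (w : FreeMonoid X) : FreeMonoid X :=
  FreeMonoid.ofList (FreeMonoid.toList w).reverse

theorem mirror_eq_reverse {α : Type*} :
    (mirror : FreeMonoid α → FreeMonoid α) = FreeMonoid.reverse :=
  rfl

namespace FreeMonoid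

variable {α : Type*}

theorem of_mul_of_ne {x y : α} (hxy : x ≠ y) : of y * of x ≠ of x * of y := fun h ↦
  hxy (List.cons.inj (congrArg toList h : [y, x] = [x, y])).1.symm

theorem length_pow (w : FreeMonoid α) (n : ℕ) : (w ^ n).length = n * w.length := by
  induction n with
  | zero => simp
  | succ n ih => rw [pow_succ, length_mul, ih, Nat.succ_mul]

theorem reverse_pow (w : FreeMonoid α) (n : ℕ) : (w ^ n).reverse = w.reverse ^ n := by
  induction n with
  | zero => rfl
  | succ n ih => rw [pow_succ, reverse_mul, ih, pow_succ']

def reverseConj (ν : Monoid.End (FreeMonoid α)) : Monoid.End (FreeMonoid α) where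
  toFun := reverse ∘ ν ∘ reverse
  map_one' := congrArg reverse (map_one ν)
  map_mul' a b := by simp only [Function.comp_apply, reverse_mul, map_mul]

def constEnd (a : α) : Monoid.End (FreeMonoid α) := lift fun _ ↦ of a

theorem constEnd_apply (a : α) (w : FreeMonoid α) : constEnd a w = of a ^ w.length := by
  induction w using FreeMonoid.inductionOn' with
  | one => simp
  | of_mul b w ih => rw [map_mul, ih, length_mul, length_of, add_comm, pow_succ']; rfl

theorem reverse_constEnd_reverse (a : α) (w : FreeMonoid α) :
    (constEnd a w.reverse).reverse = constEnd a w := by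
  rw [constEnd_apply, constEnd_apply, reverse_pow, reverse_of, length_reverse]

theorem apply_of_eq_pow_of_commute {f : FreeMonoid α → FreeMonoid α} {a : α}
    (h : ∀ w, f (constEnd a w) = constEnd a (f w)) : f (of a) = of a ^ (f (of a)).length :=
  (h (of a)).trans (constEnd_apply a _)

theorem eq_refl_of_commute_constEnd (σ : FreeMonoid α ≃* FreeMonoid α)
    (h : ∀ a w, σ (constEnd a w) = constEnd a (σ w)) : σ = MulEquiv.refl _ := by
  have h_symm : ∀ a w, σ.symm (constEnd a w) = constEnd a (σ.symm w) := fun a w ↦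
    σ.injective (by rw [h, MulEquiv.apply_symm_apply, MulEquiv.apply_symm_apply])
  suffices h_of : ∀ a, σ (of a) = of a from
    MulEquiv.toMonoidHom_injective (hom_eq h_of)
  intro a
  have h_pow : σ (of a) ^ (σ.symm (of a)).length = of a := by
    rw [← map_pow, ← apply_of_eq_pow_of_commute (h_symm a), MulEquiv.apply_symm_apply]
  have h_len : (σ.symm (of a)).length * (σ (of a)).length = 1 := by
    simpa only [length_pow, length_of] using congrArg length h_pow
  rw [apply_of_eq_pow_of_commute (h a), Nat.eq_one_of_mul_eq_one_left h_len, pow_one]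

theorem exists_reverse_comp_comp_reverse_ne {x y : α} (hxy : x ≠ y) :
    ∃ ν : Monoid.End (FreeMonoid α), reverse ∘ ν ∘ reverse ≠ ν := by
  refine ⟨lift fun _ ↦ of x * of y, fun h ↦ of_mul_of_ne hxy ?_⟩
  have h_x : reverse (of x * of y) = of x * of y := congrFun h (of x)
  rwa [reverse_mul, reverse_of, reverse_of] at h_x

end FreeMonoid

open FreeMonoid in
/-- On the free monoid over a set with at least two elements, the word-reversal map
`υ` is not a monoid homomorphism; nevertheless `ν ↦ υ ∘ ν ∘ υ` maps monoid
endomorphisms to monoid endomorphisms, and the resulting automorphism of `End(S)` is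
not inner: no monoid automorphism `σ` of `S` conjugates to it. -/
theorem mirror_automorphism_not_inner (X : Type*) (x y : X) (hxy : x ≠ y) :
    (¬ ∀ a b : FreeMonoid X, mirror (a * b) = mirror a * mirror b) ∧
    (∀ ν : Monoid.End (FreeMonoid X), ∃ μ : Monoid.End (FreeMonoid X),
      (μ : FreeMonoid X → FreeMonoid X) = mirror ∘ ν ∘ mirror) ∧
    ¬ ∃ σ : FreeMonoid X ≃* FreeMonoid X, ∀ ν : Monoid.End (FreeMonoid X),
      mirror ∘ (ν : FreeMonoid X → FreeMonoid X) ∘ mirror =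
        (σ : FreeMonoid X → FreeMonoid X) ∘ ν ∘
          (σ.symm : FreeMonoid X → FreeMonoid X) := by
  rw [mirror_eq_reverse]
  refine ⟨fun h ↦ of_mul_of_ne hxy ?_, fun ν ↦ ⟨reverseConj ν, rfl⟩, ?_⟩
  · simpa only [reverse_mul, reverse_of] using h (of x) (of y)
  rintro ⟨σ, hσ⟩
  have h_commute : ∀ a w, σ (constEnd a w) = constEnd a (σ w) := fun a w ↦ by
    simpa [reverse_constEnd_reverse] using (congrFun (hσ (constEnd a)) (σ w)).symm
  obtain rfl := eq_refl_of_commute_constEnd σ h_commute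
  obtain ⟨ν, hν⟩ := exists_reverse_comp_comp_reverse_ne hxy
  exact hν (hσ ν)
end
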